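/- For all natural numbers n and m with n ≢ m (mod 2), the 2-colored quantum numbers satisfy [2]_x·[n]_y·[m]_y = [2]_y·[n]_x·[m]_x in ℤ[x,y]. -/
import Mathlib


noncomputable section

/-- The generic 2-colored quantum numbers: `a` plays the role of this color's `[2]`,
`b` plays the role of the other color's `[2]`, so that
`[0] = 0`, `[1] = 1`, `[2] = a`, and `[n] = a·[n-1] - [n-2]` for even `n ≥ 2`,
`[n] = b·[n-1] - [n-2]` for odd `n ≥ 2`. -/
def qq {R : Type*} [CommRing R] (a b : R) : ℕ → R
  | 0 => 0
  | 1 => 1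
  | n + 2 => (if n % 2 = 0 then a else b) * qq a b (n + 1) - qq a b n

/-- The 2-colored quantum number `[n]_x ∈ ℤ[x,y]` (where `x = X 0` and `y = X 1`). -/
def Qx : ℕ → MvPolynomial (Fin 2) ℤ := qq (MvPolynomial.X 0) (MvPolynomial.X 1)

/-- The 2-colored quantum number `[n]_y ∈ ℤ[x,y]` (where `x = X 0` and `y = X 1`). -/
def Qy : ℕ → MvPolynomial (Fin 2) ℤ := qq (MvPolynomial.X 1) (MvPolynomial.X 0)

lemma qq_key {R : Type*} [CommRing R] (a b : R) :
    ∀ n, (n % 2 = 1 → qq a b n = qq b a n) ∧ (n % 2 = 0 → a * qq b a n = b * qq a b n)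
  | 0 => by simp [qq]
  | 1 => by simp [qq]
  | n + 2 => by
    have ih1 := qq_key a b n
    have ih2 := qq_key a b (n + 1)
    constructor
    · intro h
      have hn : n % 2 = 1 := by omega
      have h1 : (n + 1) % 2 = 0 := by omega
      have e1 := ih1.1 hn
      have e2 := ih2.2 h1
      simp only [qq, if_neg (show ¬ n % 2 = 0 by omega)]
      linear_combination -e1 - e2
    · intro h
      have hn : n % 2 = 0 := by omega
      have h1 : (n + 1) % 2 = 1 := by omega
      have e1 := ih1.2 hn
      have e2 := ih2.1 h1
      simp only [qq, if_pos hn]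
      linear_combination -(a * b * e2) - e1

lemma key_even (n : ℕ) (hn : n % 2 = 0) : Qx 2 * Qy n = Qy 2 * Qx n := by
  have := (qq_key (MvPolynomial.X 0 : MvPolynomial (Fin 2) ℤ) (MvPolynomial.X 1) n).2 hn
  simpa [Qx, Qy, qq] using this

lemma key_odd (n : ℕ) (hn : n % 2 = 1) : Qx n = Qy n := by
  have := (qq_key (MvPolynomial.X 0 : MvPolynomial (Fin 2) ℤ) (MvPolynomial.X 1) n).1 hn
  simpa [Qx, Qy] using this

/-- For all `n ≢ m (mod 2)`, `[2]_x·[n]_y·[m]_y = [2]_y·[n]_x·[m]_x` in `ℤ[x,y]`. -/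
theorem two_color_quantum_product_different_parity (n m : ℕ) (h : n % 2 ≠ m % 2) :
    Qx 2 * Qy n * Qy m = Qy 2 * Qx n * Qx m := by
  rcases Nat.even_or_odd n with hn | hn
  · have hn' : n % 2 = 0 := Nat.even_iff.mp hn
    have hm : m % 2 = 1 := by omega
    linear_combination Qy m * (key_even n hn') - Qy 2 * Qx n * (key_odd m hm)
  · have hn' : n % 2 = 1 := Nat.odd_iff.mp hn
    have hm : m % 2 = 0 := by omega
    linear_combination Qy n * (key_even m hm) - Qy 2 * Qx m * (key_odd n hn')
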